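/- Let m ≥ 2, let B be a blocker in CK(2m), and let e = {i, j} ∈ B be a non-boundary edge (i.e., an edge of order at least 2). Then each of the two closed arcs determined by e — the arc {i, i+1, …, j} and the arc {j, j+1, …, i} (indices mod 2m) — contains both endpoints of at least one boundary edge belonging to B. -/

import Mathlib

def inArc (n : ℕ) (a b z : ZMod n) : Prop :=
  0 < (z - a).val ∧ (z - a).val < (b - a).val

def Cross (n : ℕ) (e f : Sym2 (ZMod n)) : Prop :=
  ∃ a b c d : ZMod n, e = s(a, b) ∧ f = s(c, d) ∧
    a ≠ b ∧ a ≠ c ∧ a ≠ d ∧ b ≠ c ∧ b ≠ d ∧ c ≠ d ∧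
    Xor' (inArc n a b c) (inArc n a b d)

def IsSPM (m : ℕ) (M : Finset (Sym2 (ZMod (2 * m)))) : Prop :=
  M.card = m ∧
  (∀ e ∈ M, ¬ e.IsDiag) ∧
  (∀ v : ZMod (2 * m), ∃! e, e ∈ M ∧ v ∈ e) ∧
  (∀ e ∈ M, ∀ f ∈ M, ¬ Cross (2 * m) e f)

def IsBlockingSet (m : ℕ) (B : Set (Sym2 (ZMod (2 * m)))) : Prop :=
  (∀ e ∈ B, ¬ e.IsDiag) ∧
  ∀ M : Finset (Sym2 (ZMod (2 * m))), IsSPM m M → ∃ e ∈ M, e ∈ B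

def IsBlocker (m : ℕ) (B : Finset (Sym2 (ZMod (2 * m)))) : Prop :=
  IsBlockingSet m (B : Set (Sym2 (ZMod (2 * m)))) ∧ B.card = m

def IsBoundaryEdge (m : ℕ) (e : Sym2 (ZMod (2 * m))) : Prop :=
  ∃ i : ZMod (2 * m), e = s(i, i + 1)

def edgeOrder {n : ℕ} (e : Sym2 (ZMod n)) : ℕ :=
  Sym2.lift ⟨fun i j => min (i - j).val (j - i).val, fun i j => min_comm _ _⟩ e

def edgeSum {n : ℕ} (e : Sym2 (ZMod n)) : ZMod n :=
  Sym2.lift ⟨fun i j => i + j, fun i j => add_comm i j⟩ e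

/-!
Reading vertices as positions `0, …, 2m-1` counted from a base vertex, a noncrossing pairing of
the positions yields a simple perfect matching. For odd `c`, the parallel class of edges with
`edgeSum = c` is such a matching; these `m` classes are disjoint, so a blocker, having `m` edges,
contains exactly one edge of each and all its edges have odd sum. For `e = s(i, j) ∈ B`, the
arc from `i` to `j` then has odd length `k`; pair it off by consecutive boundary edges and pair
the remaining positions by the chords parallel to `e`. This is a simple perfect matching, which
`B` must meet: not in a parallel chord, as `e` is the only edge of its class in `B` and does not
occur, hence in a boundary edge of the arc.
-/

open Finset

section Positions

variable {n : ℕ}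

lemma val_add_natCast_sub_self {i : ZMod n} {x : ℕ} (hx : x < n) : (i + x - i).val = x := by
  rw [add_sub_cancel_left, ZMod.val_cast_of_lt hx]

lemma eq_add_val_sub [NeZero n] (i v : ZMod n) : v = i + ((v - i).val : ZMod n) := by
  rw [ZMod.natCast_zmod_val, add_sub_cancel]

lemma val_sub_eq_of_mem_mk {i v : ZMod n} {x y : ℕ} (hx : x < n) (hy : y < n)
    (h : v ∈ s(i + x, i + y)) : (v - i).val = x ∨ (v - i).val = y := by
  rcases Sym2.mem_iff.mp h with rfl | rfl
  · exact Or.inl (val_add_natCast_sub_self hx)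
  · exact Or.inr (val_add_natCast_sub_self hy)

lemma val_sub_eq_ite [NeZero n] (t a z : ZMod n) :
    (z - a).val = if (a - t).val ≤ (z - t).val then (z - t).val - (a - t).val
      else n + (z - t).val - (a - t).val := by
  have hza : z - a = (z - t) - (a - t) := by ring
  split_ifs with h
  · rw [hza, ZMod.val_sub h]
  · have hlt := ZMod.val_lt (a - t)
    rw [← ZMod.val_cast_of_lt (by omega : n + (z - t).val - (a - t).val < n), hza,
      Nat.cast_sub (by omega), Nat.cast_add, ZMod.natCast_self, ZMod.natCast_zmod_val,
      ZMod.natCast_zmod_val, zero_add]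

end Positions

def Interleaved (x y z w : ℕ) : Prop :=
  z ≠ x ∧ z ≠ y ∧ w ≠ x ∧ w ≠ y ∧
    Xor (min x y < z ∧ z < max x y) (min x y < w ∧ w < max x y)

section Crossing

variable {n : ℕ} [NeZero n]

lemma interleaved_val_sub_of_inArc (t : ZMod n) {a b c d : ZMod n} (hac : a ≠ c) (had : a ≠ d)
    (hbc : b ≠ c) (hbd : b ≠ d) (h : Xor (inArc n a b c) (inArc n a b d)) :
    Interleaved (a - t).val (b - t).val (c - t).val (d - t).val := by
  have hval : ∀ {u v : ZMod n}, u ≠ v → (u - t).val ≠ (v - t).val := fun huv hval =>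
    huv (sub_left_injective (ZMod.val_injective n hval))
  have := hval hac; have := hval had; have := hval hbc; have := hval hbd
  have := ZMod.val_lt (a - t); have := ZMod.val_lt (b - t)
  have := ZMod.val_lt (c - t); have := ZMod.val_lt (d - t)
  unfold inArc at h
  rw [val_sub_eq_ite t a c, val_sub_eq_ite t a b, val_sub_eq_ite t a d] at h
  simp only [Interleaved, Xor] at h ⊢
  split_ifs at h <;> omega

lemma interleaved_of_cross {i : ZMod n} {x y z w : ℕ} (hx : x < n) (hy : y < n) (hz : z < n)
    (hw : w < n) (h : Cross n s(i + x, i + y) s(i + z, i + w)) : Interleaved x y z w := by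
  obtain ⟨a, b, c, d, he, hf, -, hac, had, hbc, hbd, -, hxor⟩ := h
  have := interleaved_val_sub_of_inArc i hac had hbc hbd hxor
  rcases Sym2.eq_iff.mp he with ⟨rfl, rfl⟩ | ⟨rfl, rfl⟩ <;>
    rcases Sym2.eq_iff.mp hf with ⟨rfl, rfl⟩ | ⟨rfl, rfl⟩ <;>
    simp only [val_add_natCast_sub_self, hx, hy, hz, hw] at this <;>
    simp only [Interleaved, Xor] at this ⊢ <;> omega

end Crossing

structure IsNoncrossingPairing (n : ℕ) (τ : ℕ → ℕ) : Prop where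
  lt : ∀ x < n, τ x < n
  involutive : ∀ x < n, τ (τ x) = x
  ne : ∀ x < n, τ x ≠ x
  not_interleaved : ∀ x < n, ∀ y < n, ¬ Interleaved x (τ x) y (τ y)

def pairingMatching (n : ℕ) (i : ZMod n) (τ : ℕ → ℕ) : Finset (Sym2 (ZMod n)) :=
  (range n).image fun x : ℕ => s(i + (x : ZMod n), i + (τ x : ZMod n))

lemma mem_pairingMatching {n : ℕ} {i : ZMod n} {τ : ℕ → ℕ} {e : Sym2 (ZMod n)} :
    e ∈ pairingMatching n i τ ↔ ∃ x < n, s(i + x, i + τ x) = e := by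
  simp [pairingMatching]

lemma two_mul_card_of_existsUnique_mem {n : ℕ} [NeZero n] {M : Finset (Sym2 (ZMod n))}
    (hdiag : ∀ e ∈ M, ¬ e.IsDiag) (hcover : ∀ v, ∃! e, e ∈ M ∧ v ∈ e) : 2 * #M = n := by
  classical
  have h := card_mul_eq_card_mul (fun e v => v ∈ e) (s := M) (t := univ) (m := 2) (n := 1)
    (fun e he => by
      rw [← Sym2.card_toFinset_of_not_isDiag e (hdiag e he)]
      congr 1; ext v; simp [bipartiteAbove, Sym2.mem_toFinset])
    (fun v _ => by
      obtain ⟨e, he, huniq⟩ := hcover v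
      rw [card_eq_one]
      exact ⟨e, by ext f; simpa [bipartiteBelow] using ⟨fun hf => huniq f hf, fun h => h ▸ he⟩⟩)
  rw [card_univ, ZMod.card] at h
  omega

theorem IsNoncrossingPairing.isSPM {m : ℕ} [NeZero m] {τ : ℕ → ℕ}
    (hτ : IsNoncrossingPairing (2 * m) τ) (i : ZMod (2 * m)) :
    IsSPM m (pairingMatching (2 * m) i τ) := by
  have hdiag : ∀ e ∈ pairingMatching (2 * m) i τ, ¬ e.IsDiag := by
    rintro _ he hdiag
    obtain ⟨x, hx, rfl⟩ := mem_pairingMatching.mp he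
    have := congrArg (fun v => (v - i).val) (Sym2.mk_isDiag_iff.mp hdiag)
    simp only [val_add_natCast_sub_self hx, val_add_natCast_sub_self (hτ.lt x hx)] at this
    exact hτ.ne x hx this.symm
  have hcover : ∀ v, ∃! e, e ∈ pairingMatching (2 * m) i τ ∧ v ∈ e := by
    intro v
    obtain ⟨x, hx, rfl⟩ : ∃ x < 2 * m, i + (x : ZMod (2 * m)) = v :=
      ⟨_, ZMod.val_lt (v - i), (eq_add_val_sub i v).symm⟩
    refine ⟨s(i + x, i + τ x), ⟨mem_pairingMatching.mpr ⟨x, hx, rfl⟩, Sym2.mem_mk_left _ _⟩, ?_⟩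
    rintro _ ⟨he, hv⟩
    obtain ⟨y, hy, rfl⟩ := mem_pairingMatching.mp he
    rcases val_sub_eq_of_mem_mk hy (hτ.lt y hy) hv with h | h <;>
      rw [val_add_natCast_sub_self hx] at h <;> subst h
    · rfl
    · rw [hτ.involutive y hy, Sym2.eq_swap]
  refine ⟨?_, hdiag, hcover, ?_⟩
  · have := two_mul_card_of_existsUnique_mem hdiag hcover
    omega
  · intro e he f hf hcross
    obtain ⟨x, hx, rfl⟩ := mem_pairingMatching.mp he
    obtain ⟨y, hy, rfl⟩ := mem_pairingMatching.mp hf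
    exact hτ.not_interleaved x hx y hy
      (interleaved_of_cross hx (hτ.lt x hx) hy (hτ.lt y hy) hcross)

-- The representative of `k - x` modulo `n`: it pairs the positions into the chords of sum `k`.
def reflect (n k x : ℕ) : ℕ := if x ≤ k then k - x else n + k - x

def arcPairing (n k x : ℕ) : ℕ :=
  if k < x then reflect n k x else if x % 2 = 0 then x + 1 else x - 1

section Pairings

variable {n k : ℕ}

theorem reflect_isNoncrossingPairing (hk : k < n) (hn : Even n) (hko : Odd k) :
    IsNoncrossingPairing n (reflect n k) := by
  rw [Nat.even_iff] at hn
  rw [Nat.odd_iff] at hko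
  refine ⟨fun x hx => ?_, fun x hx => ?_, fun x hx => ?_, fun x hx y hy => ?_⟩ <;>
    simp only [reflect, Interleaved, Xor] <;> split_ifs <;> omega

theorem arcPairing_isNoncrossingPairing (hk : k < n) (hn : Even n) (hko : Odd k) :
    IsNoncrossingPairing n (arcPairing n k) := by
  rw [Nat.even_iff] at hn
  rw [Nat.odd_iff] at hko
  refine ⟨fun x hx => ?_, fun x hx => ?_, fun x hx => ?_, fun x hx y hy => ?_⟩ <;>
    simp only [arcPairing, reflect, Interleaved, Xor] <;> split_ifs <;> omega

lemma edgeSum_mk_add_reflect (i : ZMod n) {x : ℕ} (hx : x < n) :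
    edgeSum s(i + (x : ZMod n), i + (reflect n k x : ZMod n)) = i + (i + (k : ZMod n)) := by
  have hsum : x + reflect n k x = k ∨ x + reflect n k x = n + k := by
    unfold reflect; split_ifs <;> omega
  change (i + x) + (i + reflect n k x) = _
  calc (i + x) + (i + reflect n k x : ZMod n)
      = i + (i + ((x + reflect n k x : ℕ) : ZMod n)) := by push_cast; ring
    _ = i + (i + k) := by rcases hsum with h | h <;> simp [h]

end Pairings

section Blockers

variable {m : ℕ}

def oddResidues (m : ℕ) : Finset (ZMod (2 * m)) :=
  (range m).image fun t => ((2 * t + 1 : ℕ) : ZMod (2 * m))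

lemma val_of_mem_oddResidues {c : ZMod (2 * m)} (hc : c ∈ oddResidues m) :
    ∃ t < m, c.val = 2 * t + 1 := by
  obtain ⟨t, ht, rfl⟩ := mem_image.mp hc
  exact ⟨t, mem_range.mp ht, ZMod.val_cast_of_lt (by rw [mem_range] at ht; omega)⟩

lemma card_oddResidues : #(oddResidues m) = m := by
  rw [oddResidues, card_image_of_injOn, card_range]
  intro t ht u hu htu
  have := congrArg ZMod.val htu
  simp only [coe_range, Set.mem_Iio] at ht hu
  rw [ZMod.val_cast_of_lt (by omega), ZMod.val_cast_of_lt (by omega)] at this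
  omega

lemma isBoundaryEdge_mk_of_succ {i : ZMod (2 * m)} {x y : ℕ} (h : y = x + 1 ∨ x = y + 1) :
    IsBoundaryEdge m s(i + x, i + y) := by
  rcases h with rfl | rfl
  · exact ⟨i + x, by push_cast; ring_nf⟩
  · exact ⟨i + y, by rw [Sym2.eq_swap]; push_cast; ring_nf⟩

variable [NeZero m]

lemma val_add_mod_two (a b : ZMod (2 * m)) : (a + b).val % 2 = (a.val + b.val) % 2 := by
  rw [ZMod.val_add, Nat.mod_mod_of_dvd _ (dvd_mul_right 2 m)]

lemma IsBlockingSet.exists_edgeSum_eq {B : Set (Sym2 (ZMod (2 * m)))} (hB : IsBlockingSet m B)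
    {c : ZMod (2 * m)} (hc : Odd c.val) : ∃ b ∈ B, edgeSum b = c := by
  obtain ⟨e, he, heB⟩ :=
    hB.2 _ ((reflect_isNoncrossingPairing (ZMod.val_lt c) (even_two_mul m) hc).isSPM 0)
  obtain ⟨x, hx, rfl⟩ := mem_pairingMatching.mp he
  exact ⟨_, heB, by rw [edgeSum_mk_add_reflect 0 hx, zero_add, zero_add, ZMod.natCast_zmod_val]⟩

variable {B : Finset (Sym2 (ZMod (2 * m)))}

-- The `m` odd parallel classes are disjoint matchings, each met by the `m` edges of `B`.
theorem IsBlocker.image_edgeSum (hB : IsBlocker m B) : B.image edgeSum = oddResidues m := by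
  have hsub : oddResidues m ⊆ B.image edgeSum := by
    intro c hc
    obtain ⟨t, -, hct⟩ := val_of_mem_oddResidues hc
    obtain ⟨b, hb, rfl⟩ := hB.1.exists_edgeSum_eq (c := c) ⟨t, hct⟩
    exact mem_image_of_mem _ hb
  refine (eq_of_subset_of_card_le hsub ?_).symm
  rw [card_oddResidues]
  exact card_image_le.trans hB.2.le

theorem IsBlocker.injOn_edgeSum (hB : IsBlocker m B) :
    Set.InjOn edgeSum (B : Set (Sym2 (ZMod (2 * m)))) :=
  card_image_iff.mp (by rw [hB.image_edgeSum, card_oddResidues, hB.2])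

theorem IsBlocker.odd_val_edgeSum (hB : IsBlocker m B) {b : Sym2 (ZMod (2 * m))} (hb : b ∈ B) :
    Odd (edgeSum b).val := by
  obtain ⟨t, -, ht⟩ := val_of_mem_oddResidues (hB.image_edgeSum ▸ mem_image_of_mem edgeSum hb)
  exact ⟨t, ht⟩

theorem IsBlocker.exists_boundaryEdge_of_mem (hB : IsBlocker m B) {i j : ZMod (2 * m)}
    (he : s(i, j) ∈ B) : ∃ b ∈ B, IsBoundaryEdge m b ∧ ∀ v ∈ b, (v - i).val ≤ (j - i).val := by
  set k := (j - i).val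
  have hj : j = i + k := eq_add_val_sub i j
  have hkn : k < 2 * m := ZMod.val_lt _
  have hko : Odd k := by
    have h := hB.odd_val_edgeSum he
    rw [Nat.odd_iff] at h ⊢
    rw [show edgeSum s(i, j) = i + j from rfl, val_add_mod_two] at h
    have := val_add_mod_two i (k : ZMod (2 * m))
    rw [← hj, ZMod.val_cast_of_lt hkn] at this
    omega
  have hτ := arcPairing_isNoncrossingPairing hkn (even_two_mul m) hko
  by_contra! hnone
  obtain ⟨e, heM, heB⟩ := hB.1.2 _ (hτ.isSPM i)
  obtain ⟨x, hx, rfl⟩ := mem_pairingMatching.mp heM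
  have hτx := hτ.lt x hx
  by_cases hxk : k < x
  · have hsum : edgeSum s(i + (x : ZMod (2 * m)), i + (arcPairing (2 * m) k x : ZMod (2 * m))) =
        edgeSum s(i, j) := by
      rw [arcPairing, if_pos hxk, edgeSum_mk_add_reflect i hx, ← hj]
      rfl
    have hi := hB.injOn_edgeSum heB he hsum ▸ Sym2.mem_mk_left i j
    rcases val_sub_eq_of_mem_mk hx hτx hi with h | h
    · rw [sub_self, ZMod.val_zero] at h
      omega
    · simp only [sub_self, ZMod.val_zero, arcPairing, reflect, if_pos hxk] at h
      split_ifs at h <;> omega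
  · have hτk : arcPairing (2 * m) k x ≤ k := by
      have := Nat.odd_iff.mp hko
      simp only [arcPairing, if_neg hxk]
      split_ifs <;> omega
    have hbd : IsBoundaryEdge m s(i + x, i + arcPairing (2 * m) k x) := by
      apply isBoundaryEdge_mk_of_succ
      simp only [arcPairing, if_neg hxk]
      split_ifs <;> omega
    obtain ⟨v, hv, hkv⟩ := hnone _ heB hbd
    rcases val_sub_eq_of_mem_mk hx hτx hv with h | h <;> omega

end Blockers

theorem interior_edge_arcs_contain_boundary_edges_general (m : ℕ)
    (B : Finset (Sym2 (ZMod (2 * m)))) (hB : IsBlocker m B)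
    (i j : ZMod (2 * m)) (he : s(i, j) ∈ B) :
    (∃ b ∈ B, IsBoundaryEdge m b ∧ ∀ v ∈ b, (v - i).val ≤ (j - i).val) ∧
    (∃ b ∈ B, IsBoundaryEdge m b ∧ ∀ v ∈ b, (v - j).val ≤ (i - j).val) := by
  have : NeZero m := ⟨by rintro rfl; simp [card_eq_zero.mp hB.2] at he⟩
  exact ⟨hB.exists_boundaryEdge_of_mem he, hB.exists_boundaryEdge_of_mem (Sym2.eq_swap ▸ he)⟩

theorem interior_edge_arcs_contain_boundary_edges (m : ℕ) (hm : 2 ≤ m)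
    (B : Finset (Sym2 (ZMod (2 * m)))) (hB : IsBlocker m B)
    (i j : ZMod (2 * m)) (he : s(i, j) ∈ B) (hord : 2 ≤ edgeOrder s(i, j)) :
    (∃ b ∈ B, IsBoundaryEdge m b ∧ ∀ v ∈ b, (v - i).val ≤ (j - i).val) ∧
    (∃ b ∈ B, IsBoundaryEdge m b ∧ ∀ v ∈ b, (v - j).val ≤ (i - j).val) :=
  interior_edge_arcs_contain_boundary_edges_general m B hB i j he
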